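/- arXiv:1911.06837 — 4 statements merged into one kernel-verified Lean document; each statement's English description precedes it below -/
import Mathlib

section
/- Let h(x) = (1+R)x − 1 and π(x) = x^{cμ−1}(1−x)^{c(1−μ)−1}/B(cμ, c(1−μ)). If R ≤ β/ν − 1 (equivalently 1/(1+R) ≥ ν/β), then for every x < ν/β ≤ 1/(1+R) we have π(x)·h(x) < 0; consequently for any threshold A < ν/β, the reward g(A) = ∫_A^1 π(x)h(x)dx satisfies g(A) < g(ν/β), i.e., strictly increasing the threshold up to ν/β strictly increases the one-step reward. -/
open MeasureTheory Set Filter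

noncomputable def betaFun (a b : ℝ) : ℝ :=
  ∫ t in (0:ℝ)..1, t ^ (a - 1) * (1 - t) ^ (b - 1)

noncomputable def regIncBeta (x a b : ℝ) : ℝ :=
  (∫ t in (0:ℝ)..x, t ^ (a - 1) * (1 - t) ^ (b - 1)) / betaFun a b

noncomputable def betaDens (μ c x : ℝ) : ℝ :=
  x ^ (c * μ - 1) * (1 - x) ^ (c * (1 - μ) - 1) / betaFun (c * μ) (c * (1 - μ))

/-! The sign of the reward `(1 + R) x - 1` is all that matters: it is negative below `ν / β`
because `(1 + R) (ν / β) ≤ 1`, and the beta density is positive on `(0, 1)`, so the integrand is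
negative there and cutting `[A, ν / β]` out of the integration range strictly increases `g`. -/

/-- Real part of `Complex.betaIntegral_convergent`. -/
lemma betaKernel_intervalIntegrable {a b : ℝ} (ha : 0 < a) (hb : 0 < b) :
    IntervalIntegrable (fun t : ℝ => t ^ (a - 1) * (1 - t) ^ (b - 1)) volume 0 1 := by
  have hconv := Complex.betaIntegral_convergent (u := a) (v := b)
    (by simpa using ha) (by simpa using hb)
  rw [intervalIntegrable_iff_integrableOn_Ioc_of_le zero_le_one] at hconv ⊢
  have hre : IntegrableOn (fun t : ℝ => ((t : ℂ) ^ ((a : ℂ) - 1) * (1 - (t : ℂ)) ^ ((b : ℂ) - 1)).re)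
      (Ioc 0 1) := hconv.re
  refine hre.congr_fun (fun t ht => ?_) measurableSet_Ioc
  have h1t : ((1 : ℂ) - t) = ((1 - t : ℝ) : ℂ) := by push_cast; rfl
  dsimp only
  rw [h1t, ← Complex.ofReal_one, ← Complex.ofReal_sub, ← Complex.ofReal_sub,
    ← Complex.ofReal_cpow ht.1.le, ← Complex.ofReal_cpow (sub_nonneg.2 ht.2),
    ← Complex.ofReal_mul, Complex.ofReal_re]

lemma betaFun_pos {a b : ℝ} (ha : 0 < a) (hb : 0 < b) : 0 < betaFun a b :=
  intervalIntegral.intervalIntegral_pos_of_pos_on (betaKernel_intervalIntegrable ha hb)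
    (fun _ ht => mul_pos (Real.rpow_pos_of_pos ht.1 _)
      (Real.rpow_pos_of_pos (sub_pos.2 ht.2) _)) zero_lt_one

section BetaDensity

variable {μ c : ℝ} (hμ : μ ∈ Ioo (0:ℝ) 1) (hc : 0 < c)
include hμ hc

lemma betaShape_pos : 0 < c * μ ∧ 0 < c * (1 - μ) :=
  ⟨mul_pos hc hμ.1, mul_pos hc (sub_pos.2 hμ.2)⟩

lemma betaDens_pos {x : ℝ} (hx : x ∈ Ioo (0:ℝ) 1) : 0 < betaDens μ c x :=
  div_pos (mul_pos (Real.rpow_pos_of_pos hx.1 _) (Real.rpow_pos_of_pos (sub_pos.2 hx.2) _))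
    (betaFun_pos (betaShape_pos hμ hc).1 (betaShape_pos hμ hc).2)

lemma intervalIntegrable_betaDens_mul {h : ℝ → ℝ} (hh : Continuous h) {p q : ℝ}
    (hp : 0 ≤ p) (hq : q ≤ 1) (hpq : p ≤ q) :
    IntervalIntegrable (fun x => betaDens μ c x * h x) volume p q := by
  obtain ⟨ha, hb⟩ := betaShape_pos hμ hc
  have h01 : IntervalIntegrable (fun x => betaDens μ c x * h x) volume 0 1 := by
    refine (((betaKernel_intervalIntegrable ha hb).mul_continuousOn hh.continuousOn).div_const
      (betaFun (c * μ) (c * (1 - μ)))).congr (fun _ _ => ?_)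
    simp only [betaDens]
    ring
  refine h01.mono_set ?_
  rw [uIcc_of_le hpq, uIcc_of_le zero_le_one]
  exact Icc_subset_Icc hp hq

end BetaDensity

lemma mul_lt_one_of_lt_of_mul_le_one {k x t : ℝ} (hx : 0 ≤ x) (hxt : x < t) (hkt : k * t ≤ 1) :
    k * x < 1 := by
  rcases le_or_gt k 0 with hk | hk
  · linarith [mul_nonpos_of_nonpos_of_nonneg hk hx]
  · linarith [mul_lt_mul_of_pos_left hxt hk]

lemma integral_lt_integral_of_neg_on {f : ℝ → ℝ} {a b c : ℝ} (hab : a < b)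
    (hfab : IntervalIntegrable f volume a b) (hfbc : IntervalIntegrable f volume b c)
    (hneg : ∀ x ∈ Ioo a b, f x < 0) :
    ∫ x in a..c, f x < ∫ x in b..c, f x := by
  have hpos : 0 < ∫ x in a..b, -f x :=
    intervalIntegral.intervalIntegral_pos_of_pos_on hfab.neg
      (fun x hx => neg_pos.2 (hneg x hx)) hab
  rw [intervalIntegral.integral_neg] at hpos
  rw [← intervalIntegral.integral_add_adjacent_intervals hfab hfbc]
  linarith

theorem stmt6_general (μ c β ν R : ℝ) (hμ : μ ∈ Set.Ioo (0:ℝ) 1) (hc : 0 < c)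
    (hβ : β ∈ Set.Ioc (0:ℝ) 1) (hν : ν ∈ Set.Ioo (0:ℝ) 1) (hνβ : ν < β)
    (hRb : R ≤ β / ν - 1)
    (g : ℝ → ℝ)
    (hg : ∀ A, g A = ∫ x in A..1, betaDens μ c x * ((1 + R) * x - 1)) :
    (∀ x ∈ Set.Ioo 0 (ν / β), betaDens μ c x * ((1 + R) * x - 1) < 0)
    ∧ (∀ A ∈ Set.Ico (0:ℝ) (ν / β), g A < g (ν / β)) := by
  have hthr_pos : 0 < ν / β := div_pos hν.1 hβ.1
  have hthr_lt : ν / β < 1 := (div_lt_one hβ.1).2 hνβ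
  have hthr_mul : (1 + R) * (ν / β) ≤ 1 := by
    rw [← mul_div_assoc, div_le_one hβ.1, ← le_div_iff₀ hν.1]
    linarith
  have hneg : ∀ x ∈ Ioo 0 (ν / β), betaDens μ c x * ((1 + R) * x - 1) < 0 := fun x hx =>
    mul_neg_of_pos_of_neg (betaDens_pos hμ hc ⟨hx.1, hx.2.trans hthr_lt⟩)
      (sub_neg.2 (mul_lt_one_of_lt_of_mul_le_one hx.1.le hx.2 hthr_mul))
  refine ⟨hneg, fun A hA => ?_⟩
  have hreward : Continuous fun x : ℝ => (1 + R) * x - 1 := by fun_prop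
  rw [hg, hg]
  exact integral_lt_integral_of_neg_on hA.2
    (intervalIntegrable_betaDens_mul hμ hc hreward hA.1 hthr_lt.le hA.2.le)
    (intervalIntegrable_betaDens_mul hμ hc hreward hthr_pos.le le_rfl hthr_lt.le)
    (fun x hx => hneg x ⟨hA.1.trans_lt hx.1, hx.2⟩)

theorem stmt6 (μ c β ν R : ℝ) (hμ : μ ∈ Set.Ioo (0:ℝ) 1) (hc : 0 < c)
    (hβ : β ∈ Set.Ioc (0:ℝ) 1) (hν : ν ∈ Set.Ioo (0:ℝ) 1) (hνβ : ν < β)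
    (hR : 0 < R) (hRb : R ≤ β / ν - 1)
    (g : ℝ → ℝ)
    (hg : ∀ A, g A = ∫ x in A..1, betaDens μ c x * ((1 + R) * x - 1)) :
    (∀ x ∈ Set.Ioo 0 (ν / β), betaDens μ c x * ((1 + R) * x - 1) < 0)
    ∧ (∀ A ∈ Set.Ico (0:ℝ) (ν / β), g A < g (ν / β)) :=
  stmt6_general μ c β ν R hμ hc hβ hν hνβ hRb g hg
end

section
/- Under the misestimated dynamics f_α(A, μ) = β·P₊(A,μ)·((1−α)μ₊(A,μ) + αμ) + ν·(1 − P₊(A,μ)), the derivative of f_α with respect to A equals −π(A)·(Aβ(1−α) + αβμ − ν) where π(A) = A^{cμ−1}(1−A)^{c(1−μ)−1}/B(cμ, c(1−μ)). Hence, if (ν − αβμ)/(β(1−α)) ∈ (0,1), the unique maximizer of A ↦ f_α(A, μ) on (0,1) is A* = (ν − αβμ)/(β(1−α)). -/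
open MeasureTheory Set Filter
open Topology

lemma kint {a b : ℝ} (ha : 0 < a) (hb : 0 < b) :
    IntervalIntegrable (fun x : ℝ => x ^ (a - 1) * (1 - x) ^ (b - 1)) volume 0 1 := by
  have h1 : IntervalIntegrable (fun x : ℝ => x ^ (a - 1)) volume 0 (1/2) :=
    intervalIntegral.intervalIntegrable_rpow' (by linarith)
  have h2 : IntervalIntegrable (fun x : ℝ => (1 - x) ^ (b - 1)) volume (1/2) 1 := by
    have := (intervalIntegral.intervalIntegrable_rpow' (r := b - 1) (by linarith)
      (a := 0) (b := 1/2)).comp_sub_left 1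
    norm_num at this
    exact this.symm
  have hL : IntervalIntegrable (fun x : ℝ => x ^ (a - 1) * (1 - x) ^ (b - 1)) volume 0 (1/2) := by
    apply h1.mul_continuousOn
    apply ContinuousOn.rpow_const (by fun_prop)
    intro x hx
    rw [Set.uIcc_of_le (by norm_num)] at hx
    left; intro h; linarith [hx.2, sub_eq_zero.mp h]
  have hR : IntervalIntegrable (fun x : ℝ => x ^ (a - 1) * (1 - x) ^ (b - 1)) volume (1/2) 1 := by
    apply h2.continuousOn_mul
    apply ContinuousOn.rpow_const (by fun_prop)
    intro x hx
    rw [Set.uIcc_of_le (by norm_num)] at hx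
    left; linarith [hx.1]
  exact hL.trans hR

theorem stmt9 (c β ν α μ : ℝ) (hc : 0 < c) (hβ : β ∈ Set.Ioc (0:ℝ) 1)
    (hν : ν ∈ Set.Icc (0:ℝ) 1) (hα : α ∈ Set.Ico (0:ℝ) 1) (hμ : μ ∈ Set.Ioo (0:ℝ) 1)
    (f : ℝ → ℝ)
    (hf : ∀ A, f A = β * ((1 - α) * (∫ x in A..1, x * betaDens μ c x) +
        α * μ * (∫ x in A..1, betaDens μ c x)) +
      ν * (1 - ∫ x in A..1, betaDens μ c x)) :
    (∀ A ∈ Set.Ioo (0:ℝ) 1,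
      HasDerivAt f (-(betaDens μ c A) * (A * β * (1 - α) + α * β * μ - ν)) A)
    ∧ ((ν - α * β * μ) / (β * (1 - α)) ∈ Set.Ioo (0:ℝ) 1 →
        ∀ A ∈ Set.Ioo (0:ℝ) 1, A ≠ (ν - α * β * μ) / (β * (1 - α)) →
          f A < f ((ν - α * β * μ) / (β * (1 - α)))) := by
  have ha : 0 < c * μ := mul_pos hc hμ.1
  have hb : 0 < c * (1 - μ) := mul_pos hc (by linarith [hμ.2])
  have hK := kint ha hb
  have hB : 0 < betaFun (c * μ) (c * (1 - μ)) := by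
    apply intervalIntegral.intervalIntegral_pos_of_pos_on hK _ one_pos
    intro x hx
    exact mul_pos (Real.rpow_pos_of_pos hx.1 _)
      (Real.rpow_pos_of_pos (by linarith [hx.2]) _)
  have hdenspos : ∀ x ∈ Set.Ioo (0:ℝ) 1, 0 < betaDens μ c x := by
    intro x hx
    exact div_pos (mul_pos (Real.rpow_pos_of_pos hx.1 _)
      (Real.rpow_pos_of_pos (by linarith [hx.2]) _)) hB
  -- integrability of betaDens and x * betaDens on A..1 for A ∈ (0,1)
  have hKd : IntervalIntegrable (betaDens μ c) volume 0 1 := by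
    have := hK.div_const (betaFun (c * μ) (c * (1 - μ)))
    exact this
  have hcontAt : ∀ x ∈ Set.Ioo (0:ℝ) 1, ContinuousAt (betaDens μ c) x := by
    intro x hx
    unfold betaDens
    apply ContinuousAt.div_const
    apply ContinuousAt.mul
    · exact Real.continuousAt_rpow_const _ _ (Or.inl (ne_of_gt hx.1))
    · exact (Real.continuousAt_rpow_const _ _
        (Or.inl (by intro h; linarith [sub_eq_zero.mp h, hx.2]))).comp
        (continuous_const.sub continuous_id).continuousAt
  have part1 : ∀ A ∈ Set.Ioo (0:ℝ) 1,
      HasDerivAt f (-(betaDens μ c A) * (A * β * (1 - α) + α * β * μ - ν)) A := by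
    intro A hA
    have hsub : Set.uIcc A 1 ⊆ Set.uIcc (0:ℝ) 1 := by
      rw [Set.uIcc_of_le (le_of_lt hA.2), Set.uIcc_of_le zero_le_one]
      exact Set.Icc_subset_Icc (le_of_lt hA.1) le_rfl
    have hint2 : IntervalIntegrable (betaDens μ c) volume A 1 := hKd.mono_set hsub
    have hint1 : IntervalIntegrable (fun x => x * betaDens μ c x) volume A 1 :=
      hint2.continuousOn_mul continuousOn_id
    have hmeas2 : StronglyMeasurableAtFilter (betaDens μ c) (𝓝 A) volume :=
      ContinuousAt.stronglyMeasurableAtFilter isOpen_Ioo hcontAt A hA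
    have hmeas1 : StronglyMeasurableAtFilter (fun x => x * betaDens μ c x) (𝓝 A) volume :=
      ContinuousAt.stronglyMeasurableAtFilter isOpen_Ioo
        (fun x hx => continuousAt_id.mul (hcontAt x hx)) A hA
    have h2 : HasDerivAt (fun u => ∫ x in u..1, betaDens μ c x) (-(betaDens μ c A)) A :=
      intervalIntegral.integral_hasDerivAt_left hint2 hmeas2 (hcontAt A hA)
    have h1 : HasDerivAt (fun u => ∫ x in u..1, x * betaDens μ c x)
        (-(A * betaDens μ c A)) A :=
      intervalIntegral.integral_hasDerivAt_left hint1 hmeas1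
        (continuousAt_id.mul (hcontAt A hA))
    have hfe : f = fun A => β * ((1 - α) * (∫ x in A..1, x * betaDens μ c x) +
        α * μ * (∫ x in A..1, betaDens μ c x)) +
      ν * (1 - ∫ x in A..1, betaDens μ c x) := funext hf
    rw [hfe]
    have := (((h1.const_mul (1 - α)).add (h2.const_mul (α * μ))).const_mul β).add
      ((h2.const_sub 1).const_mul ν)
    refine this.congr_deriv ?_
    ring
  refine ⟨part1, ?_⟩
  intro hst A hA hne
  set A' := (ν - α * β * μ) / (β * (1 - α)) with hA'def
  have hβα : 0 < β * (1 - α) := mul_pos hβ.1 (by linarith [hα.2])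
  have hmul : β * (1 - α) * A' = ν - α * β * μ := mul_div_cancel₀ _ (ne_of_gt hβα)
  have hderivval : ∀ x ∈ Set.Ioo (0:ℝ) 1,
      deriv f x = betaDens μ c x * (β * (1 - α)) * (A' - x) := by
    intro x hx
    rw [(part1 x hx).deriv]
    have : x * β * (1 - α) + α * β * μ - ν = β * (1 - α) * (x - A') := by
      have : β * (1 - α) * (x - A') = β * (1 - α) * x - β * (1 - α) * A' := by ring
      rw [this, hmul]; ring
    rw [this]; ring
  have hsubI : ∀ {x y : ℝ}, x ∈ Set.Ioo (0:ℝ) 1 → y ∈ Set.Ioo (0:ℝ) 1 →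
      Set.Icc x y ⊆ Set.Ioo (0:ℝ) 1 := by
    intro x y hx hy z hz
    exact ⟨lt_of_lt_of_le hx.1 hz.1, lt_of_le_of_lt hz.2 hy.2⟩
  rcases lt_or_gt_of_ne hne with hlt | hgt
  · have hmono : StrictMonoOn f (Set.Icc A A') := by
      apply strictMonoOn_of_deriv_pos (convex_Icc A A')
      · exact fun x hx => ((part1 x (hsubI hA hst hx)).continuousAt).continuousWithinAt
      · intro x hx
        rw [interior_Icc] at hx
        have hx01 : x ∈ Set.Ioo (0:ℝ) 1 := ⟨lt_trans hA.1 hx.1, lt_trans hx.2 hst.2⟩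
        rw [hderivval x hx01]
        exact mul_pos (mul_pos (hdenspos x hx01) hβα) (by linarith [hx.2])
    exact hmono ⟨le_refl A, le_of_lt hlt⟩ ⟨le_of_lt hlt, le_refl A'⟩ hlt
  · have hanti : StrictAntiOn f (Set.Icc A' A) := by
      apply strictAntiOn_of_deriv_neg (convex_Icc A' A)
      · exact fun x hx => ((part1 x (hsubI hst hA hx)).continuousAt).continuousWithinAt
      · intro x hx
        rw [interior_Icc] at hx
        have hx01 : x ∈ Set.Ioo (0:ℝ) 1 := ⟨lt_trans hst.1 hx.1, lt_trans hx.2 hA.2⟩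
        rw [hderivval x hx01]
        apply mul_neg_of_pos_of_neg (mul_pos (hdenspos x hx01) hβα)
        linarith [hx.1]
    exact hanti ⟨le_refl A', le_of_lt hgt⟩ ⟨le_of_lt hgt, le_refl A⟩ hgt
end

section
/- Let F : [0,1] → [0,1] be continuous with F(μ) > μ for μ < μ_∞ and F(μ) < μ for μ > μ_∞, F monotone nondecreasing, and let two sequences evolve by μ^{(0)}_{t+1} = F(μ^{(0)}_t) and μ^{(1)}_{t+1} = F(μ^{(1)}_t) from arbitrary initial points μ^{(0)}_0, μ^{(1)}_0 ∈ [0,1]. Then |μ^{(0)}_t − μ^{(1)}_t| → 0 as t → ∞. -/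
/-!
An orbit of `F` started below the fixed point `μlim` is nondecreasing (`F y > y` there) and
stays below `μlim` (`F` is monotone and fixes `μlim`), so it converges; by continuity its limit is
a fixed point of `F`, which can only be `μlim`. Orbits started above `μlim` are the same
situation in the order dual. Hence both groups converge to `μlim`, and so does their gap to `0`.
-/

open MeasureTheory Set Filter

open Function Topology

theorem eq_iterate_of_forall_succ {α : Type*} {f : α → α} {u : ℕ → α}
    (hu : ∀ n, u (n + 1) = f (u n)) (n : ℕ) : u n = f^[n] (u 0) := by
  induction n with
  | zero => rfl
  | succ n ih => rw [hu, ih, iterate_succ_apply']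

theorem isFixedPt_of_tendsto_iterate_of_mapsTo {α : Type*} [TopologicalSpace α] [T2Space α]
    {f : α → α} {s : Set α} {x y : α} (hy : Tendsto (fun n => f^[n] x) atTop (𝓝 y))
    (hs : MapsTo f s s) (hx : x ∈ s) (hf : ContinuousWithinAt f s y) : IsFixedPt f y := by
  have hy' : Tendsto (fun n => f^[n] x) atTop (𝓝[s] y) :=
    tendsto_nhdsWithin_iff.2 ⟨hy, .of_forall fun n => hs.iterate n hx⟩
  refine tendsto_nhds_unique ((tendsto_add_atTop_iff_nat 1).1 ?_) hy
  simp only [iterate_succ']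
  exact hf.tendsto.comp hy'

section OrderedOrbit

variable {α : Type*} [ConditionallyCompleteLinearOrder α] [TopologicalSpace α] [OrderTopology α]
  {f : α → α} {s : Set α} {a x : α}

theorem tendsto_iterate_of_le_of_lt_map (hxa : x ≤ a) (hfix : IsFixedPt f a)
    (hmono : MonotoneOn f (Icc x a)) (hcont : ContinuousOn f (Icc x a))
    (hlt : ∀ y ∈ Icc x a, y < a → y < f y) :
    Tendsto (fun n => f^[n] x) atTop (𝓝 a) := by
  have hxI : x ∈ Icc x a := left_mem_Icc.2 hxa
  have haI : a ∈ Icc x a := right_mem_Icc.2 hxa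
  have hle_map : ∀ y ∈ Icc x a, y ≤ f y := fun y hy =>
    hy.2.lt_or_eq.elim (fun h => (hlt y hy h).le) fun h => h ▸ hfix.ge
  have hmaps : MapsTo f (Icc x a) (Icc x a) := fun y hy =>
    ⟨hy.1.trans (hle_map y hy), hfix.eq ▸ hmono hy haI hy.2⟩
  have horbit : ∀ n, f^[n] x ∈ Icc x a := fun n => hmaps.iterate n hxI
  have hmono_orbit : Monotone fun n => f^[n] x := monotone_nat_of_le_succ fun n => by
    rw [iterate_succ_apply']
    exact hle_map _ (horbit n)
  obtain ⟨L, hL⟩ : ∃ L, Tendsto (fun n => f^[n] x) atTop (𝓝 L) :=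
    ⟨_, tendsto_atTop_ciSup hmono_orbit ⟨a, forall_mem_range.2 fun n => (horbit n).2⟩⟩
  have hLI : L ∈ Icc x a := isClosed_Icc.mem_of_tendsto hL (.of_forall horbit)
  have hfixL : IsFixedPt f L :=
    isFixedPt_of_tendsto_iterate_of_mapsTo hL hmaps hxI (hcont L hLI)
  obtain rfl : L = a := hLI.2.eq_of_not_lt fun h => (hlt L hLI h).ne hfixL.eq.symm
  exact hL

theorem tendsto_iterate_of_le_of_map_lt (hax : a ≤ x) (hfix : IsFixedPt f a)
    (hmono : MonotoneOn f (Icc a x)) (hcont : ContinuousOn f (Icc a x))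
    (hgt : ∀ y ∈ Icc a x, a < y → f y < y) :
    Tendsto (fun n => f^[n] x) atTop (𝓝 a) :=
  tendsto_iterate_of_le_of_lt_map (α := αᵒᵈ) (f := OrderDual.toDual ∘ f ∘ OrderDual.ofDual)
    (a := OrderDual.toDual a) (x := OrderDual.toDual x) hax hfix
    (by rw [Icc_toDual]; exact hmono.dual) (by rw [Icc_toDual]; exact hcont)
    (by rw [Icc_toDual]; exact hgt)

theorem tendsto_iterate_of_monotoneOn_of_attracting (hs : s.OrdConnected) (ha : a ∈ s)
    (hx : x ∈ s) (hfix : IsFixedPt f a) (hmono : MonotoneOn f s) (hcont : ContinuousOn f s)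
    (hlt : ∀ y ∈ s, y < a → y < f y) (hgt : ∀ y ∈ s, a < y → f y < y) :
    Tendsto (fun n => f^[n] x) atTop (𝓝 a) := by
  rcases le_total x a with hxa | hax
  · have hsub : Icc x a ⊆ s := hs.out hx ha
    exact tendsto_iterate_of_le_of_lt_map hxa hfix (hmono.mono hsub) (hcont.mono hsub)
      fun y hy => hlt y (hsub hy)
  · have hsub : Icc a x ⊆ s := hs.out ha hx
    exact tendsto_iterate_of_le_of_map_lt hax hfix (hmono.mono hsub) (hcont.mono hsub)
      fun y hy => hgt y (hsub hy)

end OrderedOrbit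

theorem stmt12_general (F : ℝ → ℝ) (μlim : ℝ)
    (hcont : ContinuousOn F (Set.Icc 0 1))
    (hμlim : μlim ∈ Set.Ioo (0:ℝ) 1) (hfix : F μlim = μlim)
    (hlt : ∀ μ ∈ Set.Icc (0:ℝ) 1, μ < μlim → μ < F μ)
    (hgt : ∀ μ ∈ Set.Icc (0:ℝ) 1, μlim < μ → F μ < μ)
    (hmono : MonotoneOn F (Set.Icc 0 1))
    (μ0 μ1 : ℕ → ℝ)
    (h0init : μ0 0 ∈ Set.Icc (0:ℝ) 1) (h1init : μ1 0 ∈ Set.Icc (0:ℝ) 1)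
    (h0 : ∀ t, μ0 (t + 1) = F (μ0 t)) (h1 : ∀ t, μ1 (t + 1) = F (μ1 t)) :
    Filter.Tendsto (fun t => |μ0 t - μ1 t|) Filter.atTop (nhds 0) := by
  have hconv : ∀ u : ℕ → ℝ, u 0 ∈ Icc 0 1 → (∀ t, u (t + 1) = F (u t)) →
      Tendsto u atTop (𝓝 μlim) := fun u hu0 hu => by
    simpa only [← eq_iterate_of_forall_succ hu] using
      tendsto_iterate_of_monotoneOn_of_attracting ordConnected_Icc (Ioo_subset_Icc_self hμlim)
        hu0 hfix hmono hcont hlt hgt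
  simpa using ((hconv μ0 h0init h0).sub (hconv μ1 h1init h1)).abs

theorem stmt12 (F : ℝ → ℝ) (μlim : ℝ)
    (hmaps : Set.MapsTo F (Set.Icc 0 1) (Set.Icc 0 1))
    (hcont : ContinuousOn F (Set.Icc 0 1))
    (hμlim : μlim ∈ Set.Ioo (0:ℝ) 1) (hfix : F μlim = μlim)
    (hlt : ∀ μ ∈ Set.Icc (0:ℝ) 1, μ < μlim → μ < F μ)
    (hgt : ∀ μ ∈ Set.Icc (0:ℝ) 1, μlim < μ → F μ < μ)
    (hmono : MonotoneOn F (Set.Icc 0 1))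
    (μ0 μ1 : ℕ → ℝ)
    (h0init : μ0 0 ∈ Set.Icc (0:ℝ) 1) (h1init : μ1 0 ∈ Set.Icc (0:ℝ) 1)
    (h0 : ∀ t, μ0 (t + 1) = F (μ0 t)) (h1 : ∀ t, μ1 (t + 1) = F (μ1 t)) :
    Filter.Tendsto (fun t => |μ0 t - μ1 t|) Filter.atTop (nhds 0) :=
  stmt12_general F μlim hcont hμlim hfix hlt hgt hmono μ0 μ1 h0init h1init h0 h1
end

section
/- The inverse regularized incomplete beta function threshold A(μ) = I⁻¹_{1−s}(cμ + k₁, c(1−μ) + k₂) is monotone nondecreasing in μ: if μ₁ ≤ μ₂ (with both in (0,1)) then A(μ₁) ≤ A(μ₂). Equivalently, for fixed x ∈ (0,1), the regularized incomplete beta function I(x; cμ + k₁, c(1−μ) + k₂) is nonincreasing in μ. -/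
open MeasureTheory Set Filter

/-!
Moving mass `δ ≥ 0` from the second Beta parameter to the first multiplies the integrand
`t^(a-1) (1-t)^(b-1)` by `t^δ (1-t)^(-δ) = (t / (1-t))^δ`, which increases in `t`. Hence, compared
with the constant multiple `(x / (1-x))^δ` of the old integrand, the new one lies below it on
`(0, x)` and above it on `(x, 1)`, and this single crossing lowers the share of the total mass
carried by `(0, x)`. For the quantiles: `I(·; a, b)` is strictly increasing, so `A₂ < A₁` would give
`1 - s = I(A₂; μ₂) ≤ I(A₂; μ₁) < I(A₁; μ₁) = 1 - s`.
-/

lemma integral_div_integral_le_of_single_crossing {f g : ℝ → ℝ} {a x b R : ℝ}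
    (hax : a ≤ x) (hxb : x ≤ b)
    (hfi : IntervalIntegrable f volume a b) (hgi : IntervalIntegrable g volume a b)
    (hf : ∀ t ∈ Icc a b, 0 ≤ f t)
    (hleft : ∀ t ∈ Ioo a x, g t ≤ R * f t) (hright : ∀ t ∈ Ioo x b, R * f t ≤ g t)
    (hF : 0 < ∫ t in a..b, f t) (hG : 0 < ∫ t in a..b, g t) :
    (∫ t in a..x, g t) / (∫ t in a..b, g t) ≤ (∫ t in a..x, f t) / ∫ t in a..b, f t := by
  have hx : x ∈ uIcc a b := by rw [uIcc_of_le (hax.trans hxb)]; exact ⟨hax, hxb⟩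
  have hfl : IntervalIntegrable f volume a x := hfi.mono_set (uIcc_subset_uIcc_left hx)
  have hfr : IntervalIntegrable f volume x b := hfi.mono_set (uIcc_subset_uIcc_right hx)
  have hgl : IntervalIntegrable g volume a x := hgi.mono_set (uIcc_subset_uIcc_left hx)
  have hgr : IntervalIntegrable g volume x b := hgi.mono_set (uIcc_subset_uIcc_right hx)
  have hl : ∫ t in a..x, g t ≤ R * ∫ t in a..x, f t := by
    rw [← intervalIntegral.integral_const_mul]
    exact intervalIntegral.integral_mono_on_of_le_Ioo hax hgl (hfl.const_mul R) hleft
  have hr : R * ∫ t in x..b, f t ≤ ∫ t in x..b, g t := by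
    rw [← intervalIntegral.integral_const_mul]
    exact intervalIntegral.integral_mono_on_of_le_Ioo hxb (hfr.const_mul R) hgr hright
  have hfl0 : 0 ≤ ∫ t in a..x, f t :=
    intervalIntegral.integral_nonneg hax fun t ht => hf t (Icc_subset_Icc_right hxb ht)
  have hfr0 : 0 ≤ ∫ t in x..b, f t :=
    intervalIntegral.integral_nonneg hxb fun t ht => hf t (Icc_subset_Icc_left hax ht)
  rw [div_le_div_iff₀ hG hF, ← intervalIntegral.integral_add_adjacent_intervals hfl hfr,
    ← intervalIntegral.integral_add_adjacent_intervals hgl hgr]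
  nlinarith [mul_le_mul_of_nonneg_right hl hfr0, mul_le_mul_of_nonneg_left hr hfl0]

noncomputable def betaIntegrand (a b t : ℝ) : ℝ := t ^ (a - 1) * (1 - t) ^ (b - 1)

lemma betaIntegrand_one_sub (a b t : ℝ) : betaIntegrand a b (1 - t) = betaIntegrand b a t := by
  simp only [betaIntegrand, sub_sub_cancel, mul_comm]

lemma betaIntegrand_nonneg (a b : ℝ) {t : ℝ} (ht : t ∈ Icc (0:ℝ) 1) : 0 ≤ betaIntegrand a b t :=
  mul_nonneg (Real.rpow_nonneg ht.1 _) (Real.rpow_nonneg (sub_nonneg.2 ht.2) _)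

lemma betaIntegrand_pos (a b : ℝ) {t : ℝ} (ht : t ∈ Ioo (0:ℝ) 1) : 0 < betaIntegrand a b t :=
  mul_pos (Real.rpow_pos_of_pos ht.1 _) (Real.rpow_pos_of_pos (sub_pos.2 ht.2) _)

lemma intervalIntegrable_betaIntegrand_zero_half {a : ℝ} (ha : 0 < a) (b : ℝ) :
    IntervalIntegrable (betaIntegrand a b) volume 0 (1 / 2) := by
  refine (intervalIntegral.intervalIntegrable_rpow' (by linarith : -1 < a - 1)).mul_continuousOn ?_
  have : Continuous fun t : ℝ => 1 - t := continuous_const.sub continuous_id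
  refine this.continuousOn.rpow_const fun t ht => Or.inl ?_
  rw [uIcc_of_le (by norm_num)] at ht
  exact sub_ne_zero.2 (by linarith [ht.2])

lemma intervalIntegrable_betaIntegrand {a b : ℝ} (ha : 0 < a) (hb : 0 < b) :
    IntervalIntegrable (betaIntegrand a b) volume 0 1 := by
  have hright : IntervalIntegrable (betaIntegrand a b) volume (1 / 2) 1 := by
    have := (intervalIntegrable_betaIntegrand_zero_half hb a).comp_sub_left 1
    norm_num [betaIntegrand_one_sub] at this
    exact this.symm
  exact (intervalIntegrable_betaIntegrand_zero_half ha b).trans hright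

lemma intervalIntegrable_betaIntegrand_of_mem {a b u v : ℝ} (ha : 0 < a) (hb : 0 < b)
    (hu : u ∈ Icc (0:ℝ) 1) (hv : v ∈ Icc (0:ℝ) 1) :
    IntervalIntegrable (betaIntegrand a b) volume u v :=
  (intervalIntegrable_betaIntegrand ha hb).mono_set <| uIcc_subset_uIcc
    (by rwa [uIcc_of_le zero_le_one]) (by rwa [uIcc_of_le zero_le_one])

lemma integral_betaIntegrand_pos {a b u v : ℝ} (ha : 0 < a) (hb : 0 < b)
    (hu : 0 ≤ u) (huv : u < v) (hv : v ≤ 1) :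
    0 < ∫ t in u..v, betaIntegrand a b t :=
  intervalIntegral.intervalIntegral_pos_of_pos_on
    (intervalIntegrable_betaIntegrand_of_mem ha hb ⟨hu, huv.le.trans hv⟩ ⟨hu.trans huv.le, hv⟩)
    (fun _ ht => betaIntegrand_pos a b ⟨hu.trans_lt ht.1, ht.2.trans_le hv⟩) huv

lemma betaFun_eq (a b : ℝ) : betaFun a b = ∫ t in (0:ℝ)..1, betaIntegrand a b t := rfl

lemma regIncBeta_eq (x a b : ℝ) :
    regIncBeta x a b = (∫ t in (0:ℝ)..x, betaIntegrand a b t) / betaFun a b := rfl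

lemma strictMonoOn_regIncBeta {a b : ℝ} (ha : 0 < a) (hb : 0 < b) :
    StrictMonoOn (fun x => regIncBeta x a b) (Icc 0 1) := by
  intro x hx y hy hxy
  simp only [regIncBeta_eq]
  refine div_lt_div_of_pos_right ?_ (betaFun_pos ha hb)
  rw [← intervalIntegral.integral_add_adjacent_intervals
    (intervalIntegrable_betaIntegrand_of_mem ha hb ⟨le_rfl, zero_le_one⟩ hx)
    (intervalIntegrable_betaIntegrand_of_mem ha hb hx hy)]
  linarith [integral_betaIntegrand_pos ha hb hx.1 hxy hy.2]

lemma monotoneOn_rpow_mul_one_sub_rpow_neg {δ : ℝ} (hδ : 0 ≤ δ) :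
    MonotoneOn (fun t : ℝ => t ^ δ * (1 - t) ^ (-δ)) (Ioo 0 1) := by
  intro t ht u hu htu
  exact mul_le_mul (Real.rpow_le_rpow ht.1.le htu hδ)
    (Real.rpow_le_rpow_of_nonpos (sub_pos.2 hu.2) (by linarith) (neg_nonpos.2 hδ))
    (Real.rpow_nonneg (sub_pos.2 ht.2).le _) (Real.rpow_nonneg hu.1.le _)

lemma betaIntegrand_add_sub (a b δ : ℝ) {t : ℝ} (ht : t ∈ Ioo (0:ℝ) 1) :
    betaIntegrand (a + δ) (b - δ) t = t ^ δ * (1 - t) ^ (-δ) * betaIntegrand a b t := by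
  have h1t : 0 < 1 - t := sub_pos.2 ht.2
  rw [betaIntegrand, betaIntegrand, add_sub_right_comm, Real.rpow_add ht.1, sub_right_comm,
    sub_eq_add_neg (b - 1), Real.rpow_add h1t]
  ring

lemma regIncBeta_add_sub_le {a b δ x : ℝ} (ha : 0 < a) (hδ : 0 ≤ δ) (hbδ : 0 < b - δ)
    (hx : x ∈ Ioo (0:ℝ) 1) :
    regIncBeta x (a + δ) (b - δ) ≤ regIncBeta x a b := by
  have hb : 0 < b := by linarith
  have haδ : 0 < a + δ := by linarith
  have hodds := monotoneOn_rpow_mul_one_sub_rpow_neg hδ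
  simp only [regIncBeta_eq, betaFun_eq]
  refine integral_div_integral_le_of_single_crossing (R := x ^ δ * (1 - x) ^ (-δ))
    hx.1.le hx.2.le (intervalIntegrable_betaIntegrand ha hb)
    (intervalIntegrable_betaIntegrand haδ hbδ) (fun t => betaIntegrand_nonneg a b)
    (fun t ht => ?_) (fun t ht => ?_) (betaFun_pos ha hb) (betaFun_pos haδ hbδ)
  · have ht01 : t ∈ Ioo (0:ℝ) 1 := ⟨ht.1, ht.2.trans hx.2⟩
    rw [betaIntegrand_add_sub a b δ ht01]
    exact mul_le_mul_of_nonneg_right (hodds ht01 hx ht.2.le) (betaIntegrand_pos a b ht01).le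
  · have ht01 : t ∈ Ioo (0:ℝ) 1 := ⟨hx.1.trans ht.1, ht.2⟩
    rw [betaIntegrand_add_sub a b δ ht01]
    exact mul_le_mul_of_nonneg_right (hodds hx ht01 ht.1.le) (betaIntegrand_pos a b ht01).le

lemma regIncBeta_le_of_mean_le {c k₁ k₂ μ₁ μ₂ x : ℝ} (hc : 0 ≤ c) (h₁ : 0 < c * μ₁ + k₁)
    (h₂ : 0 < c * (1 - μ₂) + k₂) (hμ : μ₁ ≤ μ₂) (hx : x ∈ Ioo (0:ℝ) 1) :
    regIncBeta x (c * μ₂ + k₁) (c * (1 - μ₂) + k₂) ≤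
      regIncBeta x (c * μ₁ + k₁) (c * (1 - μ₁) + k₂) := by
  have hδ : 0 ≤ c * (μ₂ - μ₁) := mul_nonneg hc (sub_nonneg.2 hμ)
  have key := regIncBeta_add_sub_le (b := c * (1 - μ₁) + k₂) h₁ hδ (by linarith) hx
  rwa [show c * μ₁ + k₁ + c * (μ₂ - μ₁) = c * μ₂ + k₁ by ring,
    show c * (1 - μ₁) + k₂ - c * (μ₂ - μ₁) = c * (1 - μ₂) + k₂ by ring] at key

theorem stmt14_general (c s k₁ k₂ x : ℝ) (hc : 0 < c)
    (hx : x ∈ Set.Ioo (0:ℝ) 1)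
    (hk : ∀ μ ∈ Set.Ioo (0:ℝ) 1, -(c * μ) < k₁ ∧ -(c * (1 - μ)) < k₂) :
    (∀ μ₁ ∈ Set.Ioo (0:ℝ) 1, ∀ μ₂ ∈ Set.Ioo (0:ℝ) 1, μ₁ ≤ μ₂ →
      regIncBeta x (c * μ₂ + k₁) (c * (1 - μ₂) + k₂) ≤
        regIncBeta x (c * μ₁ + k₁) (c * (1 - μ₁) + k₂))
    ∧ (∀ μ₁ ∈ Set.Ioo (0:ℝ) 1, ∀ μ₂ ∈ Set.Ioo (0:ℝ) 1, μ₁ ≤ μ₂ →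
        ∀ A₁ ∈ Set.Ioo (0:ℝ) 1, ∀ A₂ ∈ Set.Ioo (0:ℝ) 1,
          regIncBeta A₁ (c * μ₁ + k₁) (c * (1 - μ₁) + k₂) = 1 - s →
          regIncBeta A₂ (c * μ₂ + k₁) (c * (1 - μ₂) + k₂) = 1 - s →
          A₁ ≤ A₂) := by
  have hpos : ∀ μ ∈ Ioo (0:ℝ) 1, 0 < c * μ + k₁ ∧ 0 < c * (1 - μ) + k₂ := fun μ hμ =>
    ⟨by linarith [(hk μ hμ).1], by linarith [(hk μ hμ).2]⟩
  have hmono : ∀ y ∈ Ioo (0:ℝ) 1, ∀ μ₁ ∈ Ioo (0:ℝ) 1, ∀ μ₂ ∈ Ioo (0:ℝ) 1, μ₁ ≤ μ₂ →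
      regIncBeta y (c * μ₂ + k₁) (c * (1 - μ₂) + k₂) ≤
        regIncBeta y (c * μ₁ + k₁) (c * (1 - μ₁) + k₂) := fun y hy μ₁ hμ₁ μ₂ hμ₂ hμ =>
    regIncBeta_le_of_mean_le hc.le (hpos μ₁ hμ₁).1 (hpos μ₂ hμ₂).2 hμ hy
  refine ⟨hmono x hx, fun μ₁ hμ₁ μ₂ hμ₂ hμ A₁ hA₁ A₂ hA₂ hI₁ hI₂ => ?_⟩
  by_contra! hA
  have hstrict := strictMonoOn_regIncBeta (hpos μ₁ hμ₁).1 (hpos μ₁ hμ₁).2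
    (Ioo_subset_Icc_self hA₂) (Ioo_subset_Icc_self hA₁) hA
  linarith [hmono A₂ hA₂ μ₁ hμ₁ μ₂ hμ₂ hμ]

theorem stmt14 (c s k₁ k₂ x : ℝ) (hc : 0 < c) (hs : s ∈ Set.Ioo (0:ℝ) 1)
    (hx : x ∈ Set.Ioo (0:ℝ) 1)
    (hk : ∀ μ ∈ Set.Ioo (0:ℝ) 1, -(c * μ) < k₁ ∧ -(c * (1 - μ)) < k₂) :
    (∀ μ₁ ∈ Set.Ioo (0:ℝ) 1, ∀ μ₂ ∈ Set.Ioo (0:ℝ) 1, μ₁ ≤ μ₂ →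
      regIncBeta x (c * μ₂ + k₁) (c * (1 - μ₂) + k₂) ≤
        regIncBeta x (c * μ₁ + k₁) (c * (1 - μ₁) + k₂))
    ∧ (∀ μ₁ ∈ Set.Ioo (0:ℝ) 1, ∀ μ₂ ∈ Set.Ioo (0:ℝ) 1, μ₁ ≤ μ₂ →
        ∀ A₁ ∈ Set.Ioo (0:ℝ) 1, ∀ A₂ ∈ Set.Ioo (0:ℝ) 1,
          regIncBeta A₁ (c * μ₁ + k₁) (c * (1 - μ₁) + k₂) = 1 - s →
          regIncBeta A₂ (c * μ₂ + k₁) (c * (1 - μ₂) + k₂) = 1 - s →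
          A₁ ≤ A₂) :=
  stmt14_general c s k₁ k₂ x hc hx hk
end
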